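/- Let σ(x) := max(x, 0), let γ ∈ (0, 1) and n ≥ 1 an integer, and set γ_n := γ/2^n. Define Δ̄(x) := 2σ(x) − (1/γ_n)σ(x − 1/2 + γ_n) + (1/γ_n)σ(x − 1/2) − (1/γ_n)σ(x − 1 + γ_n) + (1/γ_n − 2)σ(x − 1), and define Δ : ℝ → ℝ by Δ(x) = 2x if x ∈ (0, 1/2], Δ(x) = 2x − 1 if x ∈ (1/2, 1], and Δ(x) = 0 otherwise. Then the n-fold compositions agree, Δ̄^{∘n}(x) = Δ^{∘n}(x), for every x in the union ⋃_{k=1}^{2^n} ((k−1)/2^n, (k−γ)/2^n). -/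
import Mathlib


/-- The ReLU function `σ(x) = max(x, 0)`. -/
noncomputable def relu : ℝ → ℝ := fun x => max x 0

/-- The ReLU approximation `Δ̄` of the ideal building block, with gap parameter `g`. -/
noncomputable def deltaBar (g : ℝ) : ℝ → ℝ := fun x =>
  2 * relu x - (1 / g) * relu (x - 1 / 2 + g) + (1 / g) * relu (x - 1 / 2)
    - (1 / g) * relu (x - 1 + g) + (1 / g - 2) * relu (x - 1)

open Classical in
/-- The ideal discontinuous building block `Δ`. -/
noncomputable def idealDelta : ℝ → ℝ := fun x =>
  if 0 < x ∧ x ≤ 1 / 2 then 2 * x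
  else if 1 / 2 < x ∧ x ≤ 1 then 2 * x - 1
  else 0

lemma relu_of_nonneg {x : ℝ} (h : 0 ≤ x) : relu x = x := max_eq_left h
lemma relu_of_nonpos {x : ℝ} (h : x ≤ 0) : relu x = 0 := max_eq_right h

lemma deltaBar_low {g x : ℝ} (hg : 0 < g) (h0 : 0 ≤ x) (h1 : x ≤ 1 / 2 - g) :
    deltaBar g x = 2 * x := by
  unfold deltaBar
  rw [relu_of_nonneg h0, relu_of_nonpos (by linarith), relu_of_nonpos (by linarith),
    relu_of_nonpos (by linarith), relu_of_nonpos (by linarith)]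
  ring

lemma deltaBar_high {g x : ℝ} (hg : 0 < g) (h0 : 1 / 2 ≤ x) (h1 : x ≤ 1 - g) :
    deltaBar g x = 2 * x - 1 := by
  unfold deltaBar
  rw [relu_of_nonneg (by linarith), relu_of_nonneg (by linarith), relu_of_nonneg (by linarith),
    relu_of_nonpos (by linarith), relu_of_nonpos (by linarith)]
  field_simp
  ring

/-- For `γ ∈ (0,1)`, `n ≥ 1`, and `γ_n = γ/2^n`, the `n`-fold
compositions of `Δ̄` (with parameter `γ_n`) and of `Δ` agree on
`⋃_{k=1}^{2^n} ((k-1)/2^n, (k-γ)/2^n)`. -/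
theorem deltaBar_iterate_eq_idealDelta_iterate
    (γ : ℝ) (hγ0 : 0 < γ) (hγ1 : γ < 1) (n : ℕ) (hn : 1 ≤ n) (x : ℝ)
    (hx : ∃ k : ℕ, 1 ≤ k ∧ k ≤ 2 ^ n ∧
      x ∈ Set.Ioo (((k : ℝ) - 1) / 2 ^ n) (((k : ℝ) - γ) / 2 ^ n)) :
    (deltaBar (γ / 2 ^ n))^[n] x = idealDelta^[n] x := by
  set g : ℝ := γ / 2 ^ n with hgdef
  have hgpos : 0 < g := div_pos hγ0 (by positivity)
  suffices H : ∀ m, m ≤ n → ∀ x : ℝ, (∃ k : ℕ, 1 ≤ k ∧ k ≤ 2 ^ m ∧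
      x ∈ Set.Ioo (((k : ℝ) - 1) / 2 ^ m) (((k : ℝ) - γ) / 2 ^ m)) →
      (deltaBar g)^[m] x = idealDelta^[m] x by
    exact H n le_rfl x hx
  intro m
  induction m with
  | zero => intro _ x _; simp
  | succ m ih =>
    intro hm x hx
    obtain ⟨k, hk1, hk2, hxl, hxr⟩ := hx
    have hm' : m ≤ n := Nat.le_of_succ_le hm
    have h2m : (0 : ℝ) < 2 ^ m := by positivity
    have h2m1 : (0 : ℝ) < 2 ^ (m + 1) := by positivity
    have hpow : (2 : ℝ) ^ (m + 1) = 2 * 2 ^ m := by ring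
    have hxl' : ((k : ℝ) - 1) < x * 2 ^ (m + 1) := (div_lt_iff₀ h2m1).mp hxl
    have hxr' : x * 2 ^ (m + 1) < ((k : ℝ) - γ) := (lt_div_iff₀ h2m1).mp hxr
    have hkR : (1 : ℝ) ≤ (k : ℝ) := by exact_mod_cast hk1
    have hgle : g ≤ γ / 2 ^ (m + 1) := by
      apply div_le_div_of_nonneg_left hγ0.le h2m1
      exact pow_le_pow_right₀ one_le_two hm
    have hggam : g * 2 ^ (m + 1) ≤ γ := (le_div_iff₀ h2m1).mp hgle
    rw [Function.iterate_succ_apply, Function.iterate_succ_apply]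
    by_cases hkc : k ≤ 2 ^ m
    · -- low half
      have hkR2 : (k : ℝ) ≤ 2 ^ m := by exact_mod_cast hkc
      have hx0 : 0 < x := by
        have : (0 : ℝ) ≤ ((k : ℝ) - 1) / 2 ^ (m + 1) := div_nonneg (by linarith) h2m1.le
        linarith [hxl]
      have hxle : x ≤ 1 / 2 - g := by nlinarith
      have hdb : deltaBar g x = 2 * x := deltaBar_low hgpos hx0.le hxle
      have hid : idealDelta x = 2 * x := by
        unfold idealDelta; rw [if_pos ⟨hx0, by linarith⟩]
      rw [hdb, hid]
      apply ih hm'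
      refine ⟨k, hk1, hkc, ?_, ?_⟩
      · rw [div_lt_iff₀ h2m]; nlinarith
      · rw [lt_div_iff₀ h2m]; nlinarith
    · -- high half
      push_neg at hkc
      have hk' : 2 ^ m + 1 ≤ k := hkc
      have hkR3 : (2 : ℝ) ^ m + 1 ≤ (k : ℝ) := by exact_mod_cast hk'
      have hkR4 : (k : ℝ) ≤ 2 ^ (m + 1) := by exact_mod_cast hk2
      have hhalf : 1 / 2 < x := by
        rw [div_lt_iff₀ (by norm_num : (0:ℝ) < 2)]; nlinarith
      have hxle : x ≤ 1 - g := by nlinarith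
      have hdb : deltaBar g x = 2 * x - 1 := deltaBar_high hgpos hhalf.le hxle
      have hid : idealDelta x = 2 * x - 1 := by
        unfold idealDelta
        rw [if_neg (by push_neg; intro _; linarith), if_pos ⟨hhalf, by linarith⟩]
      rw [hdb, hid]
      apply ih hm'
      refine ⟨k - 2 ^ m, by omega, by omega, ?_, ?_⟩
      · rw [div_lt_iff₀ h2m]; push_cast [Nat.cast_sub (le_of_lt hkc)]
        have hx2 : x * 2 ^ (m + 1) = 2 * x * 2 ^ m := by ring
        linarith
      · rw [lt_div_iff₀ h2m]; push_cast [Nat.cast_sub (le_of_lt hkc)]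
        have hx2 : x * 2 ^ (m + 1) = 2 * x * 2 ^ m := by ring
        linarith
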